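/- Let G be a graph on {1,…,n} with k ≥ 1 edges and maximum degree d, and form a random bundle by including each node independently with probability r ∈ (0,1). Then for any fixed edge (i,j) of G, the probability that both i and j are in the bundle while no other edge of G is covered by the bundle is at least r²·(1 − 2dr − kr²). -/
import Mathlib


open scoped BigOperators Classical
open Finset Filter

noncomputable section

/-- The set of all potential edges: unordered pairs of distinct nodes of `Fin n`. -/
def allPairs (n : ℕ) : Finset (Sym2 (Fin n)) :=
  Finset.univ.filter fun e => ¬ e.IsDiag

/-- Both endpoints of the pair `e` lie in the test `L`. -/
def pairIn {n : ℕ} (e : Sym2 (Fin n)) (L : Finset (Fin n)) : Prop :=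
  ∀ v ∈ e, v ∈ L

/-- The test `L` covers some edge of the edge set `E` (positive outcome `Y = 1`). -/
def covers {n : ℕ} (E : Finset (Sym2 (Fin n))) (L : Finset (Fin n)) : Prop :=
  ∃ e ∈ E, pairIn e L

/-- ER(n,q) probability weight of a given edge set `E`. -/
def erWeight (n : ℕ) (q : ℝ) (E : Finset (Sym2 (Fin n))) : ℝ :=
  q ^ E.card * (1 - q) ^ ((allPairs n).card - E.card)

/-- Probability of an event under the Erdős–Rényi random graph ER(n,q). -/
def erProb (n : ℕ) (q : ℝ) (A : Finset (Sym2 (Fin n)) → Prop) : ℝ :=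
  ∑ E ∈ (allPairs n).powerset, if A E then erWeight n q E else 0

/-- Bernoulli(p) probability weight of a single test `L ⊆ {1,…,n}`. -/
def testWeight (n : ℕ) (p : ℝ) (L : Finset (Fin n)) : ℝ :=
  p ^ L.card * (1 - p) ^ (n - L.card)

/-- Probability of an event for a single Bernoulli(p) test. -/
def bernProb (n : ℕ) (p : ℝ) (A : Finset (Fin n) → Prop) : ℝ :=
  ∑ L : Finset (Fin n), if A L then testWeight n p L else 0

/-- Probability weight of `t` i.i.d. Bernoulli(p) tests. -/
def testsWeight (n t : ℕ) (p : ℝ) (Ls : Fin t → Finset (Fin n)) : ℝ :=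
  ∏ i, testWeight n p (Ls i)

/-- Probability of an event for `t` i.i.d. Bernoulli(p) tests. -/
def bernTestsProb (n t : ℕ) (p : ℝ) (A : (Fin t → Finset (Fin n)) → Prop) : ℝ :=
  ∑ Ls : Fin t → Finset (Fin n), if A Ls then testsWeight n t p Ls else 0

/-- Joint probability over an ER(n,q) graph and `t` i.i.d. Bernoulli(p) tests. -/
def erTestsProb (n t : ℕ) (q p : ℝ)
    (A : Finset (Sym2 (Fin n)) → (Fin t → Finset (Fin n)) → Prop) : ℝ :=
  ∑ E ∈ (allPairs n).powerset, ∑ Ls : Fin t → Finset (Fin n),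
    if A E Ls then erWeight n q E * testsWeight n t p Ls else 0

/-- Degree of node `v` in the edge set `E`. -/
def degOf {n : ℕ} (E : Finset (Sym2 (Fin n))) (v : Fin n) : ℕ :=
  (E.filter fun e => v ∈ e).card

/-- Maximum degree of the edge set `E`. -/
def maxDeg {n : ℕ} (E : Finset (Sym2 (Fin n))) : ℕ :=
  Finset.univ.sup (degOf E)

/-- Average number of edges of ER(n, q n): `k̄ = q·C(n,2)`. -/
def kbar (q : ℕ → ℝ) (n : ℕ) : ℝ := q n * (n.choose 2 : ℝ)

/-- Two pairs are vertex-disjoint. -/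
def sym2Disjoint {n : ℕ} (e e' : Sym2 (Fin n)) : Prop := ∀ v, v ∈ e → v ∉ e'

namespace St15

variable {n : ℕ}

def verts (x : Sym2 (Fin n)) : Finset (Fin n) := Finset.univ.filter (· ∈ x)

lemma mem_verts {x : Sym2 (Fin n)} {v : Fin n} : v ∈ verts x ↔ v ∈ x := by
  simp [verts]

lemma pairIn_iff (x : Sym2 (Fin n)) (L : Finset (Fin n)) :
    pairIn x L ↔ verts x ⊆ L := by
  constructor
  · intro h v hv; exact h v (mem_verts.mp hv)
  · intro h v hv; exact h (mem_verts.mpr hv)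

lemma verts_mk {a b : Fin n} : verts s(a, b) = {a, b} := by
  ext v; simp [mem_verts, Sym2.mem_iff]

lemma card_verts {x : Sym2 (Fin n)} (hx : ¬ x.IsDiag) : (verts x).card = 2 := by
  induction x using Sym2.inductionOn with
  | hf a b =>
    rw [Sym2.mk_isDiag_iff] at hx
    rw [verts_mk, card_insert_of_notMem (by simpa using hx), card_singleton]

lemma sym2_eq_of_subset {x y : Sym2 (Fin n)} (hx : ¬ x.IsDiag) (hy : ¬ y.IsDiag)
    (h : verts x ⊆ verts y) : x = y := by
  induction x using Sym2.inductionOn with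
  | hf a b =>
    induction y using Sym2.inductionOn with
    | hf c d =>
      rw [Sym2.mk_isDiag_iff] at hx hy
      rw [verts_mk, verts_mk] at h
      have ha := h (mem_insert_self a _)
      have hb := h (mem_insert_of_mem (mem_singleton_self b))
      simp only [mem_insert, mem_singleton] at ha hb
      rw [Sym2.eq_iff]
      rcases ha with rfl | rfl <;> rcases hb with rfl | rfl <;> tauto

lemma testWeight_nonneg {r : ℝ} (hr0 : 0 ≤ r) (hr1 : r ≤ 1) (L : Finset (Fin n)) :
    0 ≤ testWeight n r L :=
  mul_nonneg (pow_nonneg hr0 _) (pow_nonneg (by linarith) _)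

lemma binom_sum {r : ℝ} (T : Finset (Fin n)) :
    ∑ M ∈ T.powerset, r ^ M.card * (1 - r) ^ (T.card - M.card) = 1 := by
  have h := Finset.prod_add (fun _ : Fin n => r) (fun _ => 1 - r) T
  simp only [prod_const] at h
  calc ∑ M ∈ T.powerset, r ^ M.card * (1 - r) ^ (T.card - M.card)
      = ∑ M ∈ T.powerset, r ^ M.card * (1 - r) ^ ((T \ M).card) := by
        refine sum_congr rfl fun M hM => by rw [card_sdiff_of_subset (mem_powerset.mp hM)]
    _ = (r + (1 - r)) ^ T.card := h.symm
    _ = 1 := by norm_num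

/-- probability that `S ⊆ L` equals `r ^ |S|`. -/
lemma prob_subset {r : ℝ} (S : Finset (Fin n)) :
    (∑ L : Finset (Fin n), if S ⊆ L then testWeight n r L else 0) = r ^ S.card := by
  rw [← Finset.sum_filter]
  have key : ∑ L ∈ Finset.univ.filter (fun L => S ⊆ L), testWeight n r L
      = ∑ M ∈ (Finset.univ \ S).powerset,
          r ^ S.card * (r ^ M.card * (1 - r) ^ (((Finset.univ : Finset (Fin n)) \ S).card - M.card)) := by
    refine Finset.sum_nbij' (fun L => L \ S) (fun M => S ∪ M) ?_ ?_ ?_ ?_ ?_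
    · intro L hL; simp only [mem_filter] at hL
      exact mem_powerset.mpr (sdiff_subset_sdiff (subset_univ _) (Finset.Subset.refl _))
    · intro M hM; simp only [mem_filter, mem_univ, true_and]
      exact subset_union_left
    · intro L hL; simp only [mem_filter] at hL
      exact union_sdiff_of_subset hL.2
    · intro M hM
      rw [mem_powerset, subset_sdiff] at hM
      show (S ∪ M) \ S = M
      exact union_sdiff_cancel_left hM.2.symm
    · intro L hL
      simp only [mem_filter, mem_univ, true_and] at hL
      show testWeight n r L = r ^ S.card * (r ^ (L \ S).card *
        (1 - r) ^ (((Finset.univ : Finset (Fin n)) \ S).card - (L \ S).card))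
      have hle := card_le_card hL
      have hn : L.card ≤ n := by simpa using card_le_card (subset_univ L)
      have hs : ((Finset.univ : Finset (Fin n)) \ S).card = n - S.card := by
        rw [card_sdiff_of_subset (subset_univ S), card_univ, Fintype.card_fin]
      have hls : (L \ S).card = L.card - S.card := card_sdiff_of_subset hL
      have e2 : n - L.card = ((Finset.univ : Finset (Fin n)) \ S).card - (L \ S).card := by
        rw [hs, hls]; omega
      have e1 : L.card = S.card + (L \ S).card := by rw [hls]; omega
      rw [testWeight, e2, e1, pow_add, mul_assoc]
  rw [key, ← Finset.mul_sum, binom_sum, mul_one]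

end St15

open St15

/-- unique-edge probability in a random bundle.
Let `G` have `k ≥ 1` edges and maximum degree `d`, and form a random bundle by including
each node independently with probability `r ∈ (0,1)`.  For any fixed edge `(i,j)` of `G`,
the probability that both `i` and `j` are in the bundle while no other edge of `G` is
covered is at least `r²(1 − 2dr − kr²)`. -/
theorem statement15 (n k d : ℕ) (r : ℝ) (hr0 : 0 < r) (hr1 : r < 1)
    (E : Finset (Sym2 (Fin n))) (hsimple : ∀ e ∈ E, ¬ e.IsDiag)
    (hk : E.card = k) (hk1 : 1 ≤ k) (hmax : maxDeg E = d)
    (e : Sym2 (Fin n)) (he : e ∈ E) :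
    r ^ 2 * (1 - 2 * d * r - k * r ^ 2) ≤
      bernProb n r (fun L => pairIn e L ∧ ∀ e' ∈ E, e' ≠ e → ¬ pairIn e' L) := by
  revert he
  induction e using Sym2.inductionOn with
  | hf i j =>
  intro he
  have hrle : (0:ℝ) ≤ r := hr0.le
  have hr1' : r ≤ 1 := hr1.le
  have hw : ∀ L : Finset (Fin n), 0 ≤ testWeight n r L := testWeight_nonneg hrle hr1'
  have hite : ∀ (p : Prop) [Decidable p] (L : Finset (Fin n)),
      0 ≤ (if p then testWeight n r L else 0) :=
    fun p _ L => by split <;> [exact hw L; exact le_rfl]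
  set e : Sym2 (Fin n) := s(i, j) with he_def
  have hed : ¬ e.IsDiag := hsimple e he
  -- P(pairIn e) = r^2
  have hPe : (∑ L : Finset (Fin n), if pairIn e L then testWeight n r L else 0) = r ^ 2 := by
    calc (∑ L : Finset (Fin n), if pairIn e L then testWeight n r L else 0)
        = ∑ L : Finset (Fin n), if verts e ⊆ L then testWeight n r L else 0 := by
          exact Finset.sum_congr rfl fun L _ => if_congr (pairIn_iff e L) rfl rfl
      _ = r ^ (verts e).card := prob_subset _
      _ = r ^ 2 := by rw [card_verts hed]
  -- pair probability
  have hPee : ∀ e' : Sym2 (Fin n),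
      (∑ L : Finset (Fin n), if pairIn e L ∧ pairIn e' L then testWeight n r L else 0)
        = r ^ (verts e ∪ verts e').card := by
    intro e'
    calc (∑ L : Finset (Fin n), if pairIn e L ∧ pairIn e' L then testWeight n r L else 0)
        = ∑ L : Finset (Fin n), if verts e ∪ verts e' ⊆ L then testWeight n r L else 0 := by
          exact Finset.sum_congr rfl fun L _ => if_congr
            (((pairIn_iff e L).and (pairIn_iff e' L)).trans union_subset_iff.symm) rfl rfl
      _ = r ^ (verts e ∪ verts e').card := prob_subset _
  set F := E.erase e with hF
  -- union bound
  have main : (∑ L : Finset (Fin n), if pairIn e L then testWeight n r L else 0)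
      ≤ bernProb n r (fun L => pairIn e L ∧ ∀ e' ∈ E, e' ≠ e → ¬ pairIn e' L)
        + ∑ e' ∈ F, ∑ L : Finset (Fin n),
            if pairIn e L ∧ pairIn e' L then testWeight n r L else 0 := by
    rw [bernProb, Finset.sum_comm, ← Finset.sum_add_distrib]
    apply Finset.sum_le_sum
    intro L _
    by_cases hpe : pairIn e L
    · rw [if_pos hpe]
      by_cases hT : pairIn e L ∧ ∀ e' ∈ E, e' ≠ e → ¬ pairIn e' L
      · rw [if_pos hT]
        have h0 : (0:ℝ) ≤ ∑ e' ∈ F, (if pairIn e L ∧ pairIn e' L then testWeight n r L else 0) :=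
          Finset.sum_nonneg fun e' _ => hite _ L
        linarith
      · rw [if_neg hT]
        push_neg at hT
        obtain ⟨e', he'E, hne, hpe'⟩ := hT hpe
        have hmem : e' ∈ F := Finset.mem_erase.mpr ⟨hne, he'E⟩
        have hle : testWeight n r L
            ≤ ∑ e'' ∈ F, (if pairIn e L ∧ pairIn e'' L then testWeight n r L else 0) := by
          have h2 : (if pairIn e L ∧ pairIn e' L then testWeight n r L else 0)
              = testWeight n r L := if_pos ⟨hpe, hpe'⟩
          calc testWeight n r L
              = (if pairIn e L ∧ pairIn e' L then testWeight n r L else 0) := h2.symm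
            _ ≤ ∑ e'' ∈ F, (if pairIn e L ∧ pairIn e'' L then testWeight n r L else 0) :=
              Finset.single_le_sum
                (f := fun e'' => if pairIn e L ∧ pairIn e'' L then testWeight n r L else 0)
                (fun x _ => hite _ L) hmem
        linarith
    · rw [if_neg hpe]
      have h0 : (0:ℝ) ≤ ∑ e' ∈ F, (if pairIn e L ∧ pairIn e' L then testWeight n r L else 0) :=
        Finset.sum_nonneg fun e' _ => hite _ L
      split
      · exact add_nonneg (hw L) h0
      · exact add_nonneg le_rfl h0
  -- bound the error sum
  have card3 : ∀ e' ∈ F, 3 ≤ (verts e ∪ verts e').card := by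
    intro e' he'
    rw [Finset.mem_erase] at he'
    by_contra hc
    push_neg at hc
    have hce : (verts e).card = 2 := card_verts hed
    have hsub : verts e ⊆ verts e ∪ verts e' := subset_union_left
    have heq : verts e = verts e ∪ verts e' :=
      Finset.eq_of_subset_of_card_le hsub (by omega)
    have hsub' : verts e' ⊆ verts e := by rw [heq]; exact subset_union_right
    exact he'.1 (sym2_eq_of_subset (hsimple e' he'.2) hed hsub')
  have hdeg : ∀ v : Fin n, (E.filter fun x => v ∈ x).card ≤ d := by
    intro v
    have h := Finset.le_sup (f := degOf E) (Finset.mem_univ v)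
    rw [show Finset.univ.sup (degOf E) = d from hmax] at h
    exact h
  set P : Sym2 (Fin n) → Prop := fun e' => i ∈ e' ∨ j ∈ e' with hP
  have hshare_card : (F.filter P).card ≤ 2 * d := by
    have hsub : F.filter P ⊆ (E.filter fun x => i ∈ x) ∪ (E.filter fun x => j ∈ x) := by
      intro x hx
      rw [Finset.mem_filter, Finset.mem_erase] at hx
      rcases hx.2 with h | h
      · exact Finset.mem_union_left _ (Finset.mem_filter.mpr ⟨hx.1.2, h⟩)
      · exact Finset.mem_union_right _ (Finset.mem_filter.mpr ⟨hx.1.2, h⟩)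
    calc (F.filter P).card ≤ _ := Finset.card_le_card hsub
      _ ≤ (E.filter fun x => i ∈ x).card + (E.filter fun x => j ∈ x).card :=
          Finset.card_union_le _ _
      _ ≤ d + d := Nat.add_le_add (hdeg i) (hdeg j)
      _ = 2 * d := by ring
  have card4 : ∀ e' ∈ F.filter (fun x => ¬ P x), 4 ≤ (verts e ∪ verts e').card := by
    intro e' he'
    rw [Finset.mem_filter] at he'
    have hdisj : Disjoint (verts e) (verts e') := by
      rw [Finset.disjoint_left]
      intro v hv hv'
      rw [mem_verts] at hv hv'
      rw [he_def, Sym2.mem_iff] at hv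
      rcases hv with rfl | rfl
      · exact he'.2 (Or.inl hv')
      · exact he'.2 (Or.inr hv')
    rw [Finset.card_union_of_disjoint hdisj, card_verts hed,
      card_verts (hsimple e' (Finset.mem_of_mem_erase he'.1))]
  have hsumbound : ∑ e' ∈ F, r ^ (verts e ∪ verts e').card
      ≤ 2 * d * r ^ 3 + k * r ^ 4 := by
    rw [← Finset.sum_filter_add_sum_filter_not F P (fun e' => r ^ (verts e ∪ verts e').card)]
    have h1 : ∑ e' ∈ F.filter P, r ^ (verts e ∪ verts e').card ≤ 2 * d * r ^ 3 := by
      calc ∑ e' ∈ F.filter P, r ^ (verts e ∪ verts e').card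
          ≤ (F.filter P).card • (r ^ 3) :=
            Finset.sum_le_card_nsmul _ _ _ fun x hx =>
              pow_le_pow_of_le_one hrle hr1' (card3 x (Finset.mem_of_mem_filter x hx))
        _ = ((F.filter P).card : ℝ) * r ^ 3 := nsmul_eq_mul _ _
        _ ≤ (2 * d : ℕ) * r ^ 3 := by
            apply mul_le_mul_of_nonneg_right _ (by positivity)
            exact_mod_cast hshare_card
        _ = 2 * d * r ^ 3 := by push_cast; ring
    have h2 : ∑ e' ∈ F.filter (fun x => ¬ P x), r ^ (verts e ∪ verts e').card
        ≤ k * r ^ 4 := by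
      calc ∑ e' ∈ F.filter (fun x => ¬ P x), r ^ (verts e ∪ verts e').card
          ≤ (F.filter (fun x => ¬ P x)).card • (r ^ 4) :=
            Finset.sum_le_card_nsmul _ _ _ fun x hx =>
              pow_le_pow_of_le_one hrle hr1' (card4 x hx)
        _ = ((F.filter (fun x => ¬ P x)).card : ℝ) * r ^ 4 := nsmul_eq_mul _ _
        _ ≤ (k : ℝ) * r ^ 4 := by
            apply mul_le_mul_of_nonneg_right _ (by positivity)
            have : (F.filter (fun x => ¬ P x)).card ≤ k := by
              calc (F.filter (fun x => ¬ P x)).card ≤ F.card := Finset.card_filter_le _ _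
                _ ≤ E.card := Finset.card_le_card (Finset.erase_subset _ _)
                _ = k := hk
            exact_mod_cast this
    linarith
  have hsum_eq : ∑ e' ∈ F, ∑ L : Finset (Fin n),
      (if pairIn e L ∧ pairIn e' L then testWeight n r L else 0)
      = ∑ e' ∈ F, r ^ (verts e ∪ verts e').card :=
    Finset.sum_congr rfl fun e' _ => hPee e'
  have hring : r ^ 2 * (1 - 2 * d * r - k * r ^ 2)
      = r ^ 2 - (2 * d * r ^ 3 + k * r ^ 4) := by ring
  rw [hring]
  rw [hPe, hsum_eq] at main
  linarith [hsumbound]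


end
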